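/- Let (V, e) be an absolute order unit space and let p, q be order projections in V; write q′ = e − q. Then the following are equivalent: (1) p ∧̇ q is an order projection; (2) p is absolutely compatible with q (i.e. |p − q| + |p + q − e| = e); (3) both p ∧̇ q and p ∧̇ q′ are order projections. -/

import Mathlib

/-- The data of an *absolutely ordered space* on a real ordered vector space `V`:
a positive cone (given by the order, compatible with scalars and generating)
together with an absolute value map `|·| : V → V⁺` satisfying conditions (a)–(e). -/
structure AbsOrderedData (V : Type*) [AddCommGroup V] [PartialOrder V] [IsOrderedAddMonoid V] [Module ℝ V] : Type _ where
  /-- the absolute value map -/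
  vabs : V → V
  /-- the cone is closed under multiplication by nonnegative scalars -/
  smul_nonneg : ∀ (k : ℝ) (v : V), 0 ≤ k → 0 ≤ v → 0 ≤ k • v
  /-- the cone is generating -/
  generating : ∀ v : V, ∃ a b : V, 0 ≤ a ∧ 0 ≤ b ∧ v = a - b
  /-- `|·|` takes values in the cone -/
  abs_mem : ∀ v : V, 0 ≤ vabs v
  /-- (a) `|v| = v` for `v ∈ V⁺` -/
  abs_of_nonneg : ∀ v : V, 0 ≤ v → vabs v = v
  /-- (b) `|v| + v ∈ V⁺` -/
  abs_add_nonneg : ∀ v : V, 0 ≤ vabs v + v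
  /-- (b) `|v| − v ∈ V⁺` -/
  abs_sub_nonneg : ∀ v : V, 0 ≤ vabs v - v
  /-- (c) `|k • v| = |k| • |v|` -/
  abs_smul : ∀ (k : ℝ) (v : V), vabs (k • v) = |k| • vabs v
  /-- (d) if `|u − v| = u + v` and `0 ≤ w ≤ v` then `|u − w| = u + w` -/
  orth_of_le : ∀ u v w : V, vabs (u - v) = u + v → 0 ≤ w → w ≤ v → vabs (u - w) = u + w
  /-- (e), `+` case -/
  orth_add : ∀ u v w : V, vabs (u - v) = u + v → vabs (u - w) = u + w →
    vabs (u - (v + w)) = u + vabs (v + w)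
  /-- (e), `−` case -/
  orth_sub : ∀ u v w : V, vabs (u - v) = u + v → vabs (u - w) = u + w →
    vabs (u - (v - w)) = u + vabs (v - w)

namespace AbsOrderedData

variable {V : Type*} [AddCommGroup V] [PartialOrder V] [IsOrderedAddMonoid V] [Module ℝ V]

/-- `e` is an order unit for `V`. -/
def IsOrderUnit (e : V) : Prop :=
  ∀ v : V, ∃ k : ℝ, 0 < k ∧ -(k • e) ≤ v ∧ v ≤ k • e

/-- The order unit (semi)norm `‖v‖ = inf {k > 0 : −k•e ≤ v ≤ k•e}` determined by `e`. -/
noncomputable def ounorm (e : V) (v : V) : ℝ :=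
  sInf {k : ℝ | 0 < k ∧ -(k • e) ≤ v ∧ v ≤ k • e}

/-- `u ⊥ v` : `|u − v| = u + v`. -/
def orth (D : AbsOrderedData V) (u v : V) : Prop :=
  D.vabs (u - v) = u + v

/-- `u ⊥∞ v` : `‖α•u + β•v‖ = max ‖α•u‖ ‖β•v‖` for all real `α, β`. -/
def orthInfty (e u v : V) : Prop :=
  ∀ α β : ℝ, ounorm e (α • u + β • v) = max (ounorm e (α • u)) (ounorm e (β • v))

/-- `u ⊥∞ᵃ v` : `u₁ ⊥∞ v₁` whenever `0 ≤ u₁ ≤ u` and `0 ≤ v₁ ≤ v`. -/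
def orthInftyAbs (e u v : V) : Prop :=
  ∀ u₁ v₁ : V, 0 ≤ u₁ → u₁ ≤ u → 0 ≤ v₁ → v₁ ≤ v → orthInfty e u₁ v₁

/-- The cone `V⁺` is closed with respect to the order unit norm determined by `e`. -/
def PosConeClosed (e : V) : Prop :=
  ∀ v : V, (∀ ε : ℝ, 0 < ε → ∃ w : V, 0 ≤ w ∧ ounorm e (v - w) < ε) → 0 ≤ v

/-- `(V, e)` is an *absolute order unit space*: an absolutely ordered space with an order
unit `e`, a norm-closed cone, and `⊥ = ⊥∞ᵃ` on the cone. -/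
structure IsAbsOrderUnitSpace (D : AbsOrderedData V) (e : V) : Prop where
  isOrderUnit : IsOrderUnit e
  posConeClosed : PosConeClosed e
  orth_iff_orthInftyAbs : ∀ u v : V, 0 ≤ u → 0 ≤ v → (D.orth u v ↔ orthInftyAbs e u v)

/-- `u ∧̇ v = (1/2)(u + v − |u − v|)`. -/
noncomputable def wedge (D : AbsOrderedData V) (u v : V) : V :=
  (2⁻¹ : ℝ) • (u + v - D.vabs (u - v))

/-- `u ∨̇ v = (1/2)(u + v + |u − v|)`. -/
noncomputable def vee (D : AbsOrderedData V) (u v : V) : V :=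
  (2⁻¹ : ℝ) • (u + v + D.vabs (u - v))

/-- `p` is an *order projection*: `0 ≤ p ≤ e` and `p ⊥ (e − p)`. -/
def IsOP (D : AbsOrderedData V) (e p : V) : Prop :=
  0 ≤ p ∧ p ≤ e ∧ D.orth p (e - p)

/-- `u` and `v` are *absolutely compatible*: `|u − v| + |u + v − e| = e`. -/
def AbsCompat (D : AbsOrderedData V) (e u v : V) : Prop :=
  D.vabs (u - v) + D.vabs (u + v - e) = e

end AbsOrderedData

namespace AbsOrderedData

section Aux
variable {V : Type*} [AddCommGroup V] [PartialOrder V] [IsOrderedAddMonoid V] [Module ℝ V]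

lemma vabs_neg (D : AbsOrderedData V) (v : V) : D.vabs (-v) = D.vabs v := by
  have h := D.abs_smul (-1) v
  rw [neg_one_smul] at h
  simpa using h

lemma orth_symm (D : AbsOrderedData V) {u v : V} (h : D.orth u v) : D.orth v u := by
  show D.vabs (v - u) = v + u
  have h1 : v - u = -(u - v) := by abel
  rw [h1, vabs_neg D, h]
  abel

lemma orth_both (D : AbsOrderedData V) {u v w z : V} (h : D.orth u v)
    (hw : 0 ≤ w) (hwu : w ≤ u) (hz : 0 ≤ z) (hzv : z ≤ v) : D.orth w z := by
  have h1 : D.orth u z := D.orth_of_le u v z h hz hzv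
  have h2 : D.orth z u := orth_symm D h1
  have h3 : D.orth z w := D.orth_of_le z u w h2 hw hwu
  exact orth_symm D h3

lemma ounorm_bddBelow (e v : V) :
    BddBelow {k : ℝ | 0 < k ∧ -(k • e) ≤ v ∧ v ≤ k • e} :=
  ⟨0, fun k hk => hk.1.le⟩

lemma ounorm_le' (D : AbsOrderedData V) {e : V} (he : 0 ≤ e) {t : ℝ} (ht : 0 ≤ t) {v : V}
    (h1 : -(t • e) ≤ v) (h2 : v ≤ t • e) : ounorm e v ≤ t := by
  refine le_of_forall_pos_le_add fun ε hε => csInf_le (ounorm_bddBelow e v) ⟨by linarith, ?_, ?_⟩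
  · refine le_trans ?_ h1
    have h3 : 0 ≤ (t + ε) • e - t • e := by
      have h4 : (t + ε) • e - t • e = ε • e := by module
      rw [h4]; exact D.smul_nonneg _ _ hε.le he
    exact neg_le_neg (sub_nonneg.mp h3)
  · refine le_trans h2 ?_
    have h3 : 0 ≤ (t + ε) • e - t • e := by
      have h4 : (t + ε) • e - t • e = ε • e := by module
      rw [h4]; exact D.smul_nonneg _ _ hε.le he
    exact sub_nonneg.mp h3

lemma ounorm_le_one (D : AbsOrderedData V) {e v : V} (he : 0 ≤ e)
    (h1 : -e ≤ v) (h2 : v ≤ e) : ounorm e v ≤ 1 := by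
  have h1' : -((1:ℝ) • e) ≤ v := by rwa [one_smul]
  have h2' : v ≤ (1:ℝ) • e := by rwa [one_smul]
  exact ounorm_le' D he zero_le_one h1' h2'

lemma ounorm_neg (e v : V) : ounorm e (-v) = ounorm e v := by
  unfold ounorm
  congr 1
  ext k
  simp only [Set.mem_setOf_eq]
  constructor
  · rintro ⟨h0, h1, h2⟩
    exact ⟨h0, neg_le.mp h2, neg_le_neg_iff.mp h1⟩
  · rintro ⟨h0, h1, h2⟩
    exact ⟨h0, neg_le_neg h2, neg_le.mpr h1⟩

lemma le_e_of_ounorm (D : AbsOrderedData V) {e : V} (hcl : PosConeClosed e)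
    (hou : IsOrderUnit e) (he : 0 ≤ e) {v : V} (h : ounorm e v ≤ 1) : v ≤ e := by
  have key : 0 ≤ e - v := by
    apply hcl
    intro ε hε
    obtain ⟨k₀, hk₀, hc1, hc2⟩ := hou v
    have hne : {k : ℝ | 0 < k ∧ -(k • e) ≤ v ∧ v ≤ k • e}.Nonempty := ⟨k₀, hk₀, hc1, hc2⟩
    have hlt : ounorm e v < 1 + ε / 2 := lt_of_le_of_lt h (by linarith)
    obtain ⟨k, hkS, hk⟩ := exists_lt_of_csInf_lt hne hlt
    refine ⟨(max k 1) • e - v, ?_, ?_⟩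
    · have hkk' : k • e ≤ (max k 1) • e := by
        have h3 : 0 ≤ (max k 1) • e - k • e := by
          have h4 : (max k 1) • e - k • e = (max k 1 - k) • e := by module
          rw [h4]
          exact D.smul_nonneg _ _ (by simp [le_max_left]) he
        exact sub_nonneg.mp h3
      exact sub_nonneg.mpr (le_trans hkS.2.2 hkk')
    · have heq : (e - v) - ((max k 1) • e - v) = (1 - max k 1) • e := by module
      rw [heq]
      have h1' : (1:ℝ) ≤ max k 1 := le_max_right _ _
      have hb : ounorm e ((1 - max k 1) • e) ≤ max k 1 - 1 := by
        apply ounorm_le' D he (sub_nonneg.mpr h1')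
        · exact le_of_eq (by module)
        · have h5 : 0 ≤ (max k 1 - 1) • e - (1 - max k 1) • e := by
            have h6 : (max k 1 - 1) • e - (1 - max k 1) • e = (2 * (max k 1 - 1)) • e := by
              module
            rw [h6]
            exact D.smul_nonneg _ _ (by linarith) he
          exact sub_nonneg.mp h5
      have hklt : max k 1 < 1 + ε / 2 := max_lt hk (by linarith)
      linarith
  exact sub_nonneg.mp key

lemma ounorm_vabs_le_one (D : AbsOrderedData V) {e : V} (hV : D.IsAbsOrderUnitSpace e)
    (he : 0 ≤ e) {v : V} (h1 : -e ≤ v) (h2 : v ≤ e) : ounorm e (D.vabs v) ≤ 1 := by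
  have hp : (0:V) ≤ (2⁻¹ : ℝ) • (D.vabs v + v) :=
    D.smul_nonneg _ _ (by norm_num) (D.abs_add_nonneg v)
  have hm : (0:V) ≤ (2⁻¹ : ℝ) • (D.vabs v - v) :=
    D.smul_nonneg _ _ (by norm_num) (D.abs_sub_nonneg v)
  have h3 : (2⁻¹ : ℝ) • (D.vabs v + v) - (2⁻¹ : ℝ) • (D.vabs v - v) = v := by module
  have h4 : (2⁻¹ : ℝ) • (D.vabs v + v) + (2⁻¹ : ℝ) • (D.vabs v - v) = D.vabs v := by module
  have horth : D.orth ((2⁻¹ : ℝ) • (D.vabs v + v)) ((2⁻¹ : ℝ) • (D.vabs v - v)) := by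
    show D.vabs _ = _
    rw [h3, h4]
  have hinf := (hV.orth_iff_orthInftyAbs _ _ hp hm).mp horth _ _ hp le_rfl hm le_rfl
  have e11 := hinf 1 1
  have e1m := hinf 1 (-1)
  simp only [one_smul, neg_one_smul] at e11 e1m
  rw [ounorm_neg] at e1m
  calc ounorm e (D.vabs v)
      = ounorm e ((2⁻¹ : ℝ) • (D.vabs v + v) + (2⁻¹ : ℝ) • (D.vabs v - v)) := by rw [h4]
    _ = max (ounorm e ((2⁻¹ : ℝ) • (D.vabs v + v))) (ounorm e ((2⁻¹ : ℝ) • (D.vabs v - v))) :=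
        e11
    _ = ounorm e ((2⁻¹ : ℝ) • (D.vabs v + v) + -((2⁻¹ : ℝ) • (D.vabs v - v))) := e1m.symm
    _ = ounorm e v := by rw [show (2⁻¹ : ℝ) • (D.vabs v + v) + -((2⁻¹ : ℝ) • (D.vabs v - v)) = v
          by module]
    _ ≤ 1 := ounorm_le_one D he h1 h2

lemma add_le_e_of_orth (D : AbsOrderedData V) {e : V} (hV : D.IsAbsOrderUnitSpace e)
    (he : 0 ≤ e) {u v : V} (hu : 0 ≤ u) (hv : 0 ≤ v) (h : D.orth u v)
    (hun : ounorm e u ≤ 1) (hvn : ounorm e v ≤ 1) : u + v ≤ e := by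
  have hinf := (hV.orth_iff_orthInftyAbs u v hu hv).mp h u v hu le_rfl hv le_rfl 1 1
  simp only [one_smul] at hinf
  apply le_e_of_ounorm D hV.posConeClosed hV.isOrderUnit he
  rw [hinf]
  exact max_le hun hvn

lemma isOP_compl (D : AbsOrderedData V) {e q : V} (hq : D.IsOP e q) : D.IsOP e (e - q) := by
  obtain ⟨h0, h1, h2⟩ := hq
  refine ⟨sub_nonneg.mpr h1, sub_le_self _ h0, ?_⟩
  show D.vabs _ = _
  have h3 : (e - q) - (e - (e - q)) = -(q - (e - q)) := by abel
  rw [h3, vabs_neg D, h2]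
  abel

lemma absCompat_compl (D : AbsOrderedData V) {e p q : V} (h : D.AbsCompat e p q) :
    D.AbsCompat e p (e - q) := by
  show D.vabs (p - (e - q)) + D.vabs (p + (e - q) - e) = e
  have h1 : p - (e - q) = p + q - e := by abel
  have h2 : p + (e - q) - e = p - q := by abel
  rw [h1, h2, add_comm]
  exact h

/-- (2) ⇒ (1): absolute compatibility implies `p ∧̇ q` is an order projection. -/
lemma isOP_wedge_of_absCompat (D : AbsOrderedData V) {e p q : V}
    (hp : D.IsOP e p) (hq : D.IsOP e q) (hc : D.AbsCompat e p q) :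
    D.IsOP e (D.wedge p q) := by
  obtain ⟨hp0, hpe, hpo⟩ := hp
  obtain ⟨hq0, hqe, hqo⟩ := hq
  have hA : D.wedge p q = (2⁻¹ : ℝ) • (p + q - D.vabs (p - q)) := rfl
  have hc' : D.vabs (p - q) + D.vabs (p + q - e) = e := hc
  have hr : D.vabs (p - q) = e - D.vabs (p + q - e) := eq_sub_of_add_eq hc'
  have ht1 : (0:V) ≤ D.vabs (p + q - e) + (p + q - e) := D.abs_add_nonneg _
  have ht2 : (0:V) ≤ D.vabs (p + q - e) - (p + q - e) := D.abs_sub_nonneg _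
  have hb1 : (0:V) ≤ D.vabs (p - q) + (p - q) := D.abs_add_nonneg _
  have hb2 : (0:V) ≤ D.vabs (p - q) - (p - q) := D.abs_sub_nonneg _
  have hA0 : (0:V) ≤ D.wedge p q := by
    rw [hA, hr]
    have heq : (2⁻¹ : ℝ) • (p + q - (e - D.vabs (p + q - e)))
        = (2⁻¹ : ℝ) • (D.vabs (p + q - e) + (p + q - e)) := by module
    rw [heq]
    exact D.smul_nonneg _ _ (by norm_num) ht1
  have hp1 : (0:V) ≤ p - D.wedge p q := by
    have heq : p - D.wedge p q = (2⁻¹ : ℝ) • (D.vabs (p - q) + (p - q)) := by rw [hA]; module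
    rw [heq]
    exact D.smul_nonneg _ _ (by norm_num) hb1
  have hq1 : (0:V) ≤ q - D.wedge p q := by
    have heq : q - D.wedge p q = (2⁻¹ : ℝ) • (D.vabs (p - q) - (p - q)) := by rw [hA]; module
    rw [heq]
    exact D.smul_nonneg _ _ (by norm_num) hb2
  have hp1q' : p - D.wedge p q ≤ e - q := by
    have heq : (e - q) - (p - D.wedge p q)
        = (2⁻¹ : ℝ) • (D.vabs (p + q - e) - (p + q - e)) := by rw [hA, hr]; module
    have h5 := D.smul_nonneg (2⁻¹) _ (by norm_num) ht2
    rw [← heq] at h5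
    exact sub_nonneg.mp h5
  have hq1p' : q - D.wedge p q ≤ e - p := by
    have heq : (e - p) - (q - D.wedge p q)
        = (2⁻¹ : ℝ) • (D.vabs (p + q - e) - (p + q - e)) := by rw [hA, hr]; module
    have h5 := D.smul_nonneg (2⁻¹) _ (by norm_num) ht2
    rw [← heq] at h5
    exact sub_nonneg.mp h5
  have hApA : D.orth (D.wedge p q) (p - D.wedge p q) :=
    orth_both D hqo hA0 (sub_nonneg.mp hq1) hp1 hp1q'
  have hAqA : D.orth (D.wedge p q) (q - D.wedge p q) :=
    orth_both D hpo hA0 (sub_nonneg.mp hp1) hq1 hq1p'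
  have hAr : D.orth (D.wedge p q) (D.vabs (p - q)) := by
    have h5 := D.orth_add _ _ _ hApA hAqA
    have h6 : (p - D.wedge p q) + (q - D.wedge p q) = D.vabs (p - q) := by rw [hA]; module
    rw [h6, D.abs_of_nonneg _ (D.abs_mem _)] at h5
    exact h5
  have hAt : D.orth (D.wedge p q) ((2⁻¹ : ℝ) • (D.vabs (p + q - e) - (p + q - e))) := by
    show D.vabs _ = _
    have h7 : D.wedge p q - (2⁻¹ : ℝ) • (D.vabs (p + q - e) - (p + q - e)) = p + q - e := by
      rw [hA, hr]; module
    have h8 : D.wedge p q + (2⁻¹ : ℝ) • (D.vabs (p + q - e) - (p + q - e))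
        = D.vabs (p + q - e) := by rw [hA, hr]; module
    rw [h7, h8]
  have hfin := D.orth_add _ _ _ hAt hAr
  have h9 : (2⁻¹ : ℝ) • (D.vabs (p + q - e) - (p + q - e)) + D.vabs (p - q)
      = e - D.wedge p q := by rw [hA, hr]; module
  rw [h9] at hfin
  have hcompl : (0:V) ≤ e - D.wedge p q := by
    rw [← h9]
    exact add_nonneg (D.smul_nonneg _ _ (by norm_num) ht2) (D.abs_mem _)
  refine ⟨hA0, sub_nonneg.mp hcompl, ?_⟩
  show D.vabs _ = _
  rw [hfin, D.abs_of_nonneg _ hcompl]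

/-- (1) ⇒ (2): if `p ∧̇ q` is an order projection then `p` and `q` are
absolutely compatible. -/
lemma absCompat_of_isOP_wedge (D : AbsOrderedData V) {e p q : V}
    (hV : D.IsAbsOrderUnitSpace e) (hp : D.IsOP e p) (hq : D.IsOP e q)
    (hw : D.IsOP e (D.wedge p q)) : D.AbsCompat e p q := by
  obtain ⟨hp0, hpe, hpo⟩ := hp
  obtain ⟨hq0, hqe, hqo⟩ := hq
  obtain ⟨hA0, hAe, hAo⟩ := hw
  have he0 : (0:V) ≤ e := le_trans hp0 hpe
  have hA : D.wedge p q = (2⁻¹ : ℝ) • (p + q - D.vabs (p - q)) := rfl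
  have hb1 : (0:V) ≤ D.vabs (p - q) + (p - q) := D.abs_add_nonneg _
  have hb2 : (0:V) ≤ D.vabs (p - q) - (p - q) := D.abs_sub_nonneg _
  have hp1 : (0:V) ≤ p - D.wedge p q := by
    have heq : p - D.wedge p q = (2⁻¹ : ℝ) • (D.vabs (p - q) + (p - q)) := by rw [hA]; module
    rw [heq]
    exact D.smul_nonneg _ _ (by norm_num) hb1
  have hq1 : (0:V) ≤ q - D.wedge p q := by
    have heq : q - D.wedge p q = (2⁻¹ : ℝ) • (D.vabs (p - q) - (p - q)) := by rw [hA]; module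
    rw [heq]
    exact D.smul_nonneg _ _ (by norm_num) hb2
  have hApA : D.orth (D.wedge p q) (p - D.wedge p q) :=
    D.orth_of_le _ _ _ hAo hp1 (sub_le_sub_right hpe _)
  have hAqA : D.orth (D.wedge p q) (q - D.wedge p q) :=
    D.orth_of_le _ _ _ hAo hq1 (sub_le_sub_right hqe _)
  have hAr : D.orth (D.wedge p q) (D.vabs (p - q)) := by
    have h5 := D.orth_add _ _ _ hApA hAqA
    have h6 : (p - D.wedge p q) + (q - D.wedge p q) = D.vabs (p - q) := by rw [hA]; module
    rw [h6, D.abs_of_nonneg _ (D.abs_mem _)] at h5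
    exact h5
  have hrn : ounorm e (D.vabs (p - q)) ≤ 1 := by
    apply ounorm_vabs_le_one D hV he0
    · have h7 : q - p ≤ e := le_trans (sub_le_sub hqe hp0) (by simp)
      have h8 : -(p - q) ≤ e := by rwa [neg_sub]
      exact neg_le.mp h8
    · exact le_trans (sub_le_sub hpe hq0) (by simp)
  have hAn : ounorm e (D.wedge p q) ≤ 1 :=
    ounorm_le_one D he0 (le_trans (neg_nonpos.mpr he0) hA0) hAe
  have hsum : D.wedge p q + D.vabs (p - q) ≤ e :=
    add_le_e_of_orth D hV he0 hA0 (D.abs_mem _) hAr hAn hrn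
  have hx0 : (0:V) ≤ (e - D.wedge p q) - D.vabs (p - q) := by
    have heq : (e - D.wedge p q) - D.vabs (p - q)
        = e - (D.wedge p q + D.vabs (p - q)) := by abel
    rw [heq]
    exact sub_nonneg.mpr hsum
  have hxle : (e - D.wedge p q) - D.vabs (p - q) ≤ e - D.wedge p q :=
    sub_le_self _ (D.abs_mem _)
  have hAx := D.orth_of_le _ _ _ hAo hx0 hxle
  have h1 : D.wedge p q - ((e - D.wedge p q) - D.vabs (p - q)) = p + q - e := by
    rw [hA]; module
  have h2 : D.wedge p q + ((e - D.wedge p q) - D.vabs (p - q)) = e - D.vabs (p - q) := by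
    abel
  rw [h1, h2] at hAx
  show D.vabs (p - q) + D.vabs (p + q - e) = e
  rw [hAx]
  abel

end Aux

end AbsOrderedData

open AbsOrderedData in
/-- In an absolute order unit space `(V, e)`, for order projections
`p, q` with `q′ = e − q`: (1) `p ∧̇ q` is an order projection, (2) `p` is absolutely
compatible with `q`, (3) both `p ∧̇ q` and `p ∧̇ q′` are order projections, are
equivalent. -/
theorem orderProjection_wedge_iff_absolutely_compatible {V : Type*}
    [AddCommGroup V] [PartialOrder V] [IsOrderedAddMonoid V] [Module ℝ V]
    (D : AbsOrderedData V) (e : V) (hV : D.IsAbsOrderUnitSpace e)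
    (p q : V) (hp : D.IsOP e p) (hq : D.IsOP e q) :
    (D.IsOP e (D.wedge p q) ↔ D.AbsCompat e p q) ∧
    (D.AbsCompat e p q ↔ (D.IsOP e (D.wedge p q) ∧ D.IsOP e (D.wedge p (e - q)))) := by
  have hAB : D.IsOP e (D.wedge p q) ↔ D.AbsCompat e p q :=
    ⟨fun h => absCompat_of_isOP_wedge D hV hp hq h,
     fun h => isOP_wedge_of_absCompat D hp hq h⟩
  refine ⟨hAB, ?_⟩
  constructor
  · intro h
    exact ⟨isOP_wedge_of_absCompat D hp hq h,
      isOP_wedge_of_absCompat D hp (isOP_compl D hq) (absCompat_compl D h)⟩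
  · rintro ⟨h1, _⟩
    exact hAB.mp h1
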